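/- Let ℓ_a, ℓ_b > 0 and real-valued f_a ∈ L²(0,ℓ_a), f_b ∈ L²(0,ℓ_b) be given, and assume the half-traces x_{f_a}(E), x_{f_b}(E), x_{f_ab}(E) are well defined for every E ∈ ℝ. Then the Fricke–Vogt invariant along the curve of initial conditions tends to zero at high energy: lim_{E → +∞} I(E) = 0. -/

import Mathlib

open MeasureTheory Set Filter
open scoped ENNReal

noncomputable section

/-- `IsSolution ℓ E f y y'` : `y` is a solution of `-y'' + f·y = E·y` on `[0,ℓ]`:
`y` is differentiable with continuous derivative `y'` on `[0,ℓ]`, and `y'` is absolutely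
continuous with a.e. derivative `(f - E)·y` (encoded in integrated form). -/
def IsSolution (ℓ E : ℝ) (f y y' : ℝ → ℝ) : Prop :=
  (∀ x ∈ Icc (0:ℝ) ℓ, HasDerivAt y (y' x) x) ∧
  ContinuousOn y' (Icc (0:ℝ) ℓ) ∧
  (∀ x ∈ Icc (0:ℝ) ℓ, y' x = y' 0 + ∫ t in (0:ℝ)..x, (f t - E) * y t)

/-- Neumann solution: `y(0) = 1`, `y'(0) = 0`. -/
def IsNeumannSolution (ℓ E : ℝ) (f y y' : ℝ → ℝ) : Prop :=
  IsSolution ℓ E f y y' ∧ y 0 = 1 ∧ y' 0 = 0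

/-- Dirichlet solution: `y(0) = 0`, `y'(0) = 1`. -/
def IsDirichletSolution (ℓ E : ℝ) (f y y' : ℝ → ℝ) : Prop :=
  IsSolution ℓ E f y y' ∧ y 0 = 0 ∧ y' 0 = 1

/-- `v` is the half-trace `x_f(E) = (ψ_N(ℓ,E) + ψ_D'(ℓ,E))/2`. -/
def IsHalfTrace (ℓ : ℝ) (f : ℝ → ℝ) (E v : ℝ) : Prop :=
  ∃ yN yN' yD yD' : ℝ → ℝ,
    IsNeumannSolution ℓ E f yN yN' ∧ IsDirichletSolution ℓ E f yD yD' ∧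
    v = (yN ℓ + yD' ℓ) / 2

/-- The Fricke–Vogt invariant. -/
def FV (x y z : ℝ) : ℝ := x ^ 2 + y ^ 2 + z ^ 2 - 2 * x * y * z - 1

/-- The Fibonacci trace map `T(x,y,z) = (2xy - z, x, y)`. -/
def traceMap : ℝ × ℝ × ℝ → ℝ × ℝ × ℝ :=
  fun p => (2 * p.1 * p.2.1 - p.2.2, p.1, p.2.1)

/-- The set `B` of energies whose forward orbit under the trace map, starting from the
curve of initial conditions `γ`, is bounded. -/
def traceSpectrum (γ : ℝ → ℝ × ℝ × ℝ) : Set ℝ :=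
  {E | Bornology.IsBounded (Set.range fun n : ℕ => traceMap^[n] (γ E))}

/-- Local Hausdorff dimension of `F` at `E`:
`lim_{ε ↓ 0} dim_H (F ∩ (E-ε, E+ε))`, which equals the infimum by monotonicity. -/
def locDim (F : Set ℝ) (E : ℝ) : ℝ≥0∞ :=
  ⨅ (ε : ℝ) (_ : 0 < ε), dimH (F ∩ Ioo (E - ε) (E + ε))

/-- Concatenation `f_ab = (f_a | f_b)` (on `[0, ℓa + ℓb)`). -/
def concatPair (ℓa : ℝ) (fa fb : ℝ → ℝ) : ℝ → ℝ :=
  fun x => if x < ℓa then fa x else fb (x - ℓa)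

/-- Fibonacci substitution `S(a) = ab`, `S(b) = a`, with `a = true`, `b = false`. -/
def fibSub : List Bool → List Bool :=
  fun w => w.flatMap fun c => if c then [true, false] else [true]

/-- The Fibonacci word `u`, the fixed point of the substitution starting with `a`:
its `n`-th letter is the `n`-th letter of `Sᵏ(a)` for any large `k` (here `k = n+2`). -/
def fibWord (n : ℕ) : Bool := (fibSub^[n + 2] [true]).getD n true

/-- `V` is the potential on `[0,∞)` obtained by concatenating `f_{u_0} | f_{u_1} | ⋯`
along the Fibonacci word `u`. -/
def IsFibPotential (ℓa ℓb : ℝ) (fa fb V : ℝ → ℝ) : Prop :=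
  ∀ n : ℕ, ∀ x : ℝ,
    (∑ j ∈ Finset.range n, (if fibWord j then ℓa else ℓb)) ≤ x →
    x < (∑ j ∈ Finset.range (n + 1), (if fibWord j then ℓa else ℓb)) →
    V x = (if fibWord n then fa else fb) (x - ∑ j ∈ Finset.range n, (if fibWord j then ℓa else ℓb))

/-- `(f_a, f_b)` is aperiodic: the concatenated Fibonacci potential `V` has no period `p > 0`. -/
def FibAperiodic (ℓa ℓb : ℝ) (fa fb : ℝ → ℝ) : Prop :=
  ∀ V : ℝ → ℝ, IsFibPotential ℓa ℓb fa fb V → ¬ ∃ p > 0, ∀ x ≥ 0, V (x + p) = V x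

end

/-!
For `E = k²` with `k → ∞`, a solution of `-y'' + f y = E y` is a small perturbation of the free
solution with the same initial data: pairing `y` with the free solutions `sin (k (x - t))` and
`cos (k (x - t))` in the Wronskian gives the variation-of-constants (Volterra) formula, whose
integral term is `O(‖f‖₁ / k)` once a bootstrap bounds `sup |y|`. Hence every half-trace is
`cos (√E ℓ) + o(1)`, and the three half-traces are asymptotically `cos (u + v)`, `cos u`,
`cos v` with `u = √E ℓa`, `v = √E ℓb`, where the Fricke–Vogt invariant vanishes identically.
-/

theorem AbsolutelyContinuousOnInterval.congr {X : Type*} [PseudoMetricSpace X] {f g : ℝ → X}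
    {a b : ℝ} (hf : AbsolutelyContinuousOnInterval f a b) (hfg : EqOn f g (uIcc a b)) :
    AbsolutelyContinuousOnInterval g a b := by
  refine Tendsto.congr' ?_ hf
  filter_upwards [mem_inf_of_right (mem_principal_self _)] with E hE
  exact Finset.sum_congr rfl fun i hi => by rw [hfg (hE.1 i hi).1, hfg (hE.1 i hi).2]

theorem AbsolutelyContinuousOnInterval.of_eqOn_add_integral {g g' : ℝ → ℝ} {a b : ℝ}
    (hg' : IntervalIntegrable g' volume a b)
    (hg : EqOn g (fun t => g a + ∫ s in a..t, g' s) (uIcc a b)) :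
    AbsolutelyContinuousOnInterval g a b :=
  ((ContDiffOn.absolutelyContinuousOnInterval contDiffOn_const).fun_add
    (hg'.absolutelyContinuousOnInterval_intervalIntegral left_mem_uIcc)).congr hg.symm

theorem contDiff_one_of_hasDerivAt {𝕜 F : Type*} [NontriviallyNormedField 𝕜]
    [NormedAddCommGroup F] [NormedSpace 𝕜 F] {g g' : 𝕜 → F} (hg : ∀ t, HasDerivAt g (g' t) t)
    (hg' : Continuous g') : ContDiff 𝕜 1 g :=
  contDiff_one_iff_deriv.2 ⟨fun t => (hg t).differentiableAt, by
    rwa [funext fun t => (hg t).deriv]⟩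

theorem hasDerivAt_sin_mul_sub (k x t : ℝ) :
    HasDerivAt (fun t => Real.sin (k * (x - t))) (-(k * Real.cos (k * (x - t)))) t := by
  convert (((hasDerivAt_id' t).const_sub x).const_mul k).sin using 1; ring

theorem hasDerivAt_cos_mul_sub (k x t : ℝ) :
    HasDerivAt (fun t => Real.cos (k * (x - t))) (k * Real.sin (k * (x - t))) t := by
  convert (((hasDerivAt_id' t).const_sub x).const_mul k).cos using 1; ring

theorem abs_intervalIntegral_mul_mul_le {f g u : ℝ → ℝ} {ℓ x N : ℝ}
    (hf : IntegrableOn f (Ioc 0 ℓ)) (hx : x ∈ Icc 0 ℓ) (hg : ∀ t ∈ Icc 0 ℓ, |g t| ≤ N)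
    (hu : ∀ t, |u t| ≤ 1) :
    |∫ t in 0..x, f t * g t * u t| ≤ N * ∫ t in Ioc 0 ℓ, |f t| := by
  have hN : 0 ≤ N := (abs_nonneg _).trans (hg 0 ⟨le_rfl, hx.1.trans hx.2⟩)
  have hfx : IntegrableOn f (Ioc 0 x) := hf.mono_set (Ioc_subset_Ioc_right hx.2)
  calc |∫ t in 0..x, f t * g t * u t| ≤ ∫ t in 0..x, N * |f t| := by
        rw [← Real.norm_eq_abs]
        refine intervalIntegral.norm_integral_le_of_norm_le hx.1 (ae_of_all _ fun t ht => ?_)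
          ((intervalIntegrable_iff_integrableOn_Ioc_of_le hx.1).2 (hfx.abs.const_mul N))
        rw [Real.norm_eq_abs, abs_mul, abs_mul, mul_assoc, mul_comm]
        exact mul_le_mul_of_nonneg_right ((mul_le_of_le_one_right (abs_nonneg _) (hu t)).trans
          (hg t ⟨ht.1.le, ht.2.trans hx.2⟩)) (abs_nonneg _)
    _ = N * ∫ t in Ioc 0 x, |f t| := by
        rw [intervalIntegral.integral_const_mul, intervalIntegral.integral_of_le hx.1]
    _ ≤ N * ∫ t in Ioc 0 ℓ, |f t| :=
        mul_le_mul_of_nonneg_left (setIntegral_mono_set hf.abs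
          (ae_of_all _ fun t => abs_nonneg _) (Ioc_subset_Ioc_right hx.2).eventuallyLE) hN

namespace IsSolution

variable {ℓ E : ℝ} {f y y' : ℝ → ℝ}

theorem continuousOn (hy : IsSolution ℓ E f y y') : ContinuousOn y (Icc 0 ℓ) :=
  fun t ht => (hy.1 t ht).continuousAt.continuousWithinAt

theorem intervalIntegrable_sub_mul (hy : IsSolution ℓ E f y y') (hf : IntegrableOn f (Ioc 0 ℓ))
    (hℓ : 0 ≤ ℓ) : IntervalIntegrable (fun t => (f t - E) * y t) volume 0 ℓ := by
  rw [intervalIntegrable_iff_integrableOn_Icc_of_le hℓ]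
  exact ((integrableOn_Icc_iff_integrableOn_Ioc).2 hf |>.sub (integrableOn_const
    measure_Icc_lt_top.ne)).mul_continuousOn hy.continuousOn isCompact_Icc

theorem absolutelyContinuousOnInterval (hy : IsSolution ℓ E f y y') {x : ℝ}
    (hx : x ∈ Icc 0 ℓ) : AbsolutelyContinuousOnInterval y 0 x := by
  have hsub : uIcc 0 x ⊆ Icc 0 ℓ := by rw [uIcc_of_le hx.1]; exact Icc_subset_Icc_right hx.2
  refine .of_eqOn_add_integral ((hy.2.1.mono hsub).intervalIntegrable) fun t ht => ?_
  dsimp only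
  have htx : uIcc 0 t ⊆ uIcc 0 x := uIcc_subset_uIcc_left ht
  rw [intervalIntegral.integral_eq_sub_of_hasDerivAt (fun s hs => hy.1 s (hsub (htx hs)))
    ((hy.2.1.mono (htx.trans hsub)).intervalIntegrable)]
  ring

theorem absolutelyContinuousOnInterval_deriv (hy : IsSolution ℓ E f y y')
    (hf : IntegrableOn f (Ioc 0 ℓ)) {x : ℝ} (hx : x ∈ Icc 0 ℓ) :
    AbsolutelyContinuousOnInterval y' 0 x := by
  have hsub : uIcc 0 x ⊆ Icc 0 ℓ := by rw [uIcc_of_le hx.1]; exact Icc_subset_Icc_right hx.2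
  refine .of_eqOn_add_integral ((hy.intervalIntegrable_sub_mul hf (hx.1.trans hx.2)).mono_set
    (by rwa [uIcc_of_le (hx.1.trans hx.2)])) fun t ht => hy.2.2 t (hsub ht)

theorem ae_hasDerivAt_deriv (hy : IsSolution ℓ E f y y') (hf : IntegrableOn f (Ioc 0 ℓ))
    (hℓ : 0 ≤ ℓ) : ∀ᵐ t, t ∈ Ioo 0 ℓ → HasDerivAt y' ((f t - E) * y t) t := by
  filter_upwards [(hy.intervalIntegrable_sub_mul hf hℓ).ae_hasDerivAt_integral] with t ht htℓ
  have htℓ' : t ∈ uIcc 0 ℓ := by rw [uIcc_of_le hℓ]; exact Ioo_subset_Icc_self htℓ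
  refine ((ht htℓ' 0 left_mem_uIcc).const_add (y' 0)).congr_of_eventuallyEq ?_
  filter_upwards [Icc_mem_nhds htℓ.1 htℓ.2] with s hs using hy.2.2 s hs

theorem wronskian_sub_eq_integral (hy : IsSolution ℓ E f y y') (hf : IntegrableOn f (Ioc 0 ℓ))
    {u u' : ℝ → ℝ} (hu : ∀ t, HasDerivAt u (u' t) t) (hu' : ∀ t, HasDerivAt u' (-E * u t) t)
    {x : ℝ} (hx : x ∈ Icc 0 ℓ) :
    (y' x * u x - y x * u' x) - (y' 0 * u 0 - y 0 * u' 0) = ∫ t in 0..x, f t * y t * u t := by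
  have hu₁ := contDiff_one_of_hasDerivAt hu
    (continuous_iff_continuousAt.2 fun t => (hu' t).continuousAt)
  have hu'₁ := contDiff_one_of_hasDerivAt hu' (continuous_const.mul hu₁.continuous)
  have hW : AbsolutelyContinuousOnInterval (fun t => y' t * u t - y t * u' t) 0 x :=
    ((hy.absolutelyContinuousOnInterval_deriv hf hx).fun_mul
      hu₁.contDiffOn.absolutelyContinuousOnInterval).fun_sub
      ((hy.absolutelyContinuousOnInterval hx).fun_mul
        hu'₁.contDiffOn.absolutelyContinuousOnInterval)
  -- the Wronskian is absolutely continuous with a.e. derivative `y'' u - y u'' = f y u`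
  rw [← hW.integral_deriv_eq_sub]
  refine intervalIntegral.integral_congr_ae ?_
  have hneℓ : ∀ᵐ t, t ≠ ℓ := by simp [ae_iff, measure_singleton]
  filter_upwards [hy.ae_hasDerivAt_deriv hf (hx.1.trans hx.2), hneℓ] with t hderiv htℓ ht
  rw [uIoc_of_le hx.1] at ht
  have htI : t ∈ Ioo 0 ℓ := ⟨ht.1, (ht.2.trans hx.2).lt_of_ne htℓ⟩
  rw [(((hderiv htI).fun_mul (hu t)).fun_sub
    ((hy.1 t (Ioo_subset_Icc_self htI)).fun_mul (hu' t))).deriv]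
  ring

theorem volterra (hy : IsSolution ℓ E f y y') (hf : IntegrableOn f (Ioc 0 ℓ)) {k : ℝ}
    (hE : E = k ^ 2) {x : ℝ} (hx : x ∈ Icc 0 ℓ) :
    k * y x = k * y 0 * Real.cos (k * x) + y' 0 * Real.sin (k * x)
      + ∫ t in 0..x, f t * y t * Real.sin (k * (x - t)) := by
  have hW := hy.wronskian_sub_eq_integral hf (hasDerivAt_sin_mul_sub k x) (fun t =>
    ((hasDerivAt_cos_mul_sub k x t).const_mul k).neg.congr_deriv (by rw [hE]; ring)) hx
  simp only [sub_self, sub_zero, mul_zero, Real.sin_zero, Real.cos_zero] at hW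
  linarith

theorem volterra_deriv (hy : IsSolution ℓ E f y y') (hf : IntegrableOn f (Ioc 0 ℓ)) {k : ℝ}
    (hE : E = k ^ 2) {x : ℝ} (hx : x ∈ Icc 0 ℓ) :
    y' x = y' 0 * Real.cos (k * x) - k * y 0 * Real.sin (k * x)
      + ∫ t in 0..x, f t * y t * Real.cos (k * (x - t)) := by
  have hW := hy.wronskian_sub_eq_integral hf (hasDerivAt_cos_mul_sub k x) (fun t =>
    ((hasDerivAt_sin_mul_sub k x t).const_mul k).congr_deriv (by rw [hE]; ring)) hx
  simp only [sub_self, sub_zero, mul_zero, Real.sin_zero, Real.cos_zero] at hW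
  linarith

theorem mul_abs_le (hy : IsSolution ℓ E f y y') (hf : IntegrableOn f (Ioc 0 ℓ)) {k : ℝ}
    (hE : E = k ^ 2) (hkF : 2 * ∫ t in Ioc 0 ℓ, |f t| ≤ k) {x : ℝ} (hx : x ∈ Icc 0 ℓ) :
    k * |y x| ≤ 2 * (k * |y 0| + |y' 0|) := by
  obtain ⟨t₀, ht₀, hmax⟩ :=
    isCompact_Icc.exists_isMaxOn (nonempty_Icc.2 (hx.1.trans hx.2)) hy.continuousOn.abs
  have hk : 0 ≤ k := (mul_nonneg zero_le_two
    (setIntegral_nonneg measurableSet_Ioc fun t _ => abs_nonneg (f t))).trans hkF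
  have hint : |∫ t in 0..t₀, f t * y t * Real.sin (k * (t₀ - t))|
      ≤ |y t₀| * ∫ t in Ioc 0 ℓ, |f t| :=
    abs_intervalIntegral_mul_mul_le hf ht₀ (fun t ht => hmax ht) fun t => Real.abs_sin_le_one _
  have hfree : |k * y 0 * Real.cos (k * t₀) + y' 0 * Real.sin (k * t₀)| ≤ k * |y 0| + |y' 0| := by
    refine (abs_add_le _ _).trans ?_
    rw [abs_mul, abs_mul, abs_mul, abs_of_nonneg hk]
    exact add_le_add (mul_le_of_le_one_right (by positivity) (Real.abs_cos_le_one _))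
      (mul_le_of_le_one_right (abs_nonneg _) (Real.abs_sin_le_one _))
  have ht₀le : k * |y t₀| ≤ k * |y 0| + |y' 0| + |y t₀| * ∫ t in Ioc 0 ℓ, |f t| := by
    rw [← abs_of_nonneg hk, ← abs_mul, hy.volterra hf hE ht₀, abs_of_nonneg hk]
    exact (abs_add_le _ _).trans (add_le_add hfree hint)
  calc k * |y x| ≤ k * |y t₀| := mul_le_mul_of_nonneg_left (hmax hx) hk
    -- `2 ∫ |f| ≤ k` lets the left side of `ht₀le` absorb its last term
    _ ≤ 2 * (k * |y 0| + |y' 0|) := by nlinarith [abs_nonneg (y t₀)]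

theorem abs_sub_free_le (hy : IsSolution ℓ E f y y') (hf : IntegrableOn f (Ioc 0 ℓ)) {k : ℝ}
    (hk : 0 < k) (hE : E = k ^ 2) (hkF : 2 * ∫ t in Ioc 0 ℓ, |f t| ≤ k) {x : ℝ}
    (hx : x ∈ Icc 0 ℓ) :
    |k * y x - (k * y 0 * Real.cos (k * x) + y' 0 * Real.sin (k * x))|
        ≤ 2 * (k * |y 0| + |y' 0|) / k * ∫ t in Ioc 0 ℓ, |f t| ∧
      |y' x - (y' 0 * Real.cos (k * x) - k * y 0 * Real.sin (k * x))|
        ≤ 2 * (k * |y 0| + |y' 0|) / k * ∫ t in Ioc 0 ℓ, |f t| := by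
  have hyN (t : ℝ) (ht : t ∈ Icc 0 ℓ) : |y t| ≤ 2 * (k * |y 0| + |y' 0|) / k :=
    (le_div_iff₀' hk).2 (hy.mul_abs_le hf hE hkF ht)
  constructor
  · rw [hy.volterra hf hE hx, add_sub_cancel_left]
    exact abs_intervalIntegral_mul_mul_le hf hx hyN fun t => Real.abs_sin_le_one _
  · rw [hy.volterra_deriv hf hE hx, add_sub_cancel_left]
    exact abs_intervalIntegral_mul_mul_le hf hx hyN fun t => Real.abs_cos_le_one _

end IsSolution

namespace IsHalfTrace

variable {ℓ : ℝ} {f : ℝ → ℝ}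

theorem abs_sub_cos_le {E v : ℝ} (hv : IsHalfTrace ℓ f E v) (hf : IntegrableOn f (Ioc 0 ℓ))
    (hℓ : 0 ≤ ℓ) {k : ℝ} (hk : 0 < k) (hE : E = k ^ 2) (hkF : 2 * ∫ t in Ioc 0 ℓ, |f t| ≤ k) :
    |v - Real.cos (k * ℓ)| ≤ 2 * (∫ t in Ioc 0 ℓ, |f t|) / k := by
  obtain ⟨yN, yN', yD, yD', ⟨hN, hN0, hN0'⟩, ⟨hD, hD0, hD0'⟩, rfl⟩ := hv
  have hℓmem : ℓ ∈ Icc 0 ℓ := right_mem_Icc.2 hℓ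
  have hNℓ := (hN.abs_sub_free_le hf hk hE hkF hℓmem).1
  have hDℓ := (hD.abs_sub_free_le hf hk hE hkF hℓmem).2
  simp only [hN0, hN0', hD0, hD0', abs_one, abs_zero, mul_one, mul_zero, zero_mul, add_zero,
    zero_add, sub_zero] at hNℓ hDℓ
  rw [← mul_sub, abs_mul, abs_of_pos hk, mul_div_cancel_right₀ _ hk.ne', ← le_div_iff₀' hk]
    at hNℓ
  rw [one_mul, div_mul_eq_mul_div] at hDℓ
  rw [abs_le] at hNℓ hDℓ ⊢
  constructor <;> linarith [hNℓ.1, hNℓ.2, hDℓ.1, hDℓ.2]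

theorem tendsto_sub_cos {x : ℝ → ℝ} (hx : ∀ E, IsHalfTrace ℓ f E (x E))
    (hf : IntegrableOn f (Ioc 0 ℓ)) (hℓ : 0 ≤ ℓ) :
    Tendsto (fun E => x E - Real.cos (√E * ℓ)) atTop (nhds 0) := by
  refine squeeze_zero_norm' ?_
    (tendsto_const_nhds.div_atTop Real.tendsto_sqrt_atTop :
      Tendsto (fun E => 2 * (∫ t in Ioc 0 ℓ, |f t|) / √E) atTop (nhds 0))
  filter_upwards [eventually_ge_atTop 0, Real.tendsto_sqrt_atTop.eventually_gt_atTop 0,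
    Real.tendsto_sqrt_atTop.eventually_ge_atTop (2 * ∫ t in Ioc 0 ℓ, |f t|)] with E hE hk hkF
  exact (hx E).abs_sub_cos_le hf hℓ hk (Real.sq_sqrt hE).symm hkF

end IsHalfTrace

theorem integrableOn_concatPair {ℓa ℓb : ℝ} {fa fb : ℝ → ℝ} (ha : IntegrableOn fa (Ioc 0 ℓa))
    (hb : IntegrableOn fb (Ioc 0 ℓb)) :
    IntegrableOn (concatPair ℓa fa fb) (Ioc 0 (ℓa + ℓb)) := by
  have hleft : IntegrableOn (concatPair ℓa fa fb) (Ioo 0 ℓa) :=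
    (ha.mono_set Ioo_subset_Ioc_self).congr_fun (fun x hx => (if_pos hx.2).symm)
      measurableSet_Ioo
  have hshift : IntegrableOn (fun x => fb (x - ℓa)) (Icc ℓa (ℓa + ℓb)) := by
    have := ((measurePreserving_sub_right volume ℓa).integrableOn_comp_preimage
      (measurableEmbedding_subRight ℓa) (s := Icc 0 ℓb) (f := fb)).2
      ((integrableOn_Icc_iff_integrableOn_Ioc).2 hb)
    simpa [preimage_sub_const_Icc, add_comm, Function.comp_def] using this
  have hright : IntegrableOn (concatPair ℓa fa fb) (Icc ℓa (ℓa + ℓb)) :=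
    hshift.congr_fun (fun x hx => (if_neg hx.1.not_gt).symm) measurableSet_Icc
  refine (hleft.union hright).mono_set fun x hx => ?_
  rcases lt_or_ge x ℓa with h | h
  · exact Or.inl ⟨hx.1, h⟩
  · exact Or.inr ⟨h, hx.2⟩

theorem FV_cos_add_cos_cos (u v : ℝ) : FV (Real.cos (u + v)) (Real.cos u) (Real.cos v) = 0 := by
  simp only [FV, Real.cos_add]
  linear_combination Real.sin v ^ 2 * Real.sin_sq_add_cos_sq u
    + (1 - Real.cos u ^ 2) * Real.sin_sq_add_cos_sq v

theorem abs_FV_sub_FV_le {x y z x' y' z' : ℝ} (hx : |x| ≤ 2) (hy : |y| ≤ 2) (hz : |z| ≤ 2)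
    (hx' : |x'| ≤ 2) (hy' : |y'| ≤ 2) (hz' : |z'| ≤ 2) :
    |FV x y z - FV x' y' z'| ≤ 12 * (|x - x'| + |y - y'| + |z - z'|) := by
  have hcoef {p q r s : ℝ} (hp : |p| ≤ 2) (hq : |q| ≤ 2) (hr : |r| ≤ 2) (hs : |s| ≤ 2) :
      |p + q - 2 * r * s| ≤ 12 := by
    have hrs : |2 * r * s| ≤ 8 := by
      rw [abs_mul, abs_mul, abs_two]; nlinarith [abs_nonneg r, abs_nonneg s]
    linarith [abs_sub (p + q) (2 * r * s), abs_add_le p q]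
  have hdiff : FV x y z - FV x' y' z' = (x - x') * (x + x' - 2 * y * z)
      + (y - y') * (y + y' - 2 * x' * z) + (z - z') * (z + z' - 2 * x' * y') := by
    simp only [FV]; ring
  rw [hdiff]
  refine (abs_add_three _ _ _).trans ?_
  simp only [abs_mul]
  nlinarith [hcoef hx hx' hy hz, hcoef hy hy' hx' hz, hcoef hz hz' hx' hy',
    abs_nonneg (x - x'), abs_nonneg (y - y'), abs_nonneg (z - z')]

theorem tendsto_FV_of_tendsto_sub_cos {α : Type*} {l : Filter α} {X Y Z u v : α → ℝ}
    (hX : Tendsto (fun e => X e - Real.cos (u e + v e)) l (nhds 0))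
    (hY : Tendsto (fun e => Y e - Real.cos (u e)) l (nhds 0))
    (hZ : Tendsto (fun e => Z e - Real.cos (v e)) l (nhds 0)) :
    Tendsto (fun e => FV (X e) (Y e) (Z e)) l (nhds 0) := by
  have hbdd {W c : α → ℝ} (h : Tendsto (fun e => W e - Real.cos (c e)) l (nhds 0)) :
      ∀ᶠ e in l, |W e| ≤ 2 := by
    filter_upwards [h.eventually (Metric.ball_mem_nhds 0 one_pos)] with e he
    rw [Real.dist_eq, sub_zero] at he
    linarith [abs_sub_abs_le_abs_sub (W e) (Real.cos (c e)), Real.abs_cos_le_one (c e)]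
  have hcos (θ : ℝ) : |Real.cos θ| ≤ 2 := (Real.abs_cos_le_one θ).trans one_le_two
  refine squeeze_zero_norm' ?_ (by simpa using ((hX.abs.add hY.abs).add hZ.abs).const_mul 12)
  filter_upwards [hbdd hX, hbdd hY, hbdd hZ] with e h1 h2 h3
  simpa [FV_cos_add_cos_cos] using
    abs_FV_sub_FV_le h1 h2 h3 (hcos (u e + v e)) (hcos (u e)) (hcos (v e))

/-- the Fricke–Vogt invariant along the curve of initial conditions tends
to zero at high energy: `I(E) → 0` as `E → ∞`. -/
theorem frickeVogt_tendsto_zero_high_energy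
    (ℓa ℓb : ℝ) (hℓa : 0 < ℓa) (hℓb : 0 < ℓb) (fa fb : ℝ → ℝ)
    (hfa : MeasureTheory.MemLp fa 2 (MeasureTheory.volume.restrict (Set.Ioc 0 ℓa)))
    (hfb : MeasureTheory.MemLp fb 2 (MeasureTheory.volume.restrict (Set.Ioc 0 ℓb)))
    (xa xb xab : ℝ → ℝ)
    (hxa : ∀ E : ℝ, IsHalfTrace ℓa fa E (xa E))
    (hxb : ∀ E : ℝ, IsHalfTrace ℓb fb E (xb E))
    (hxab : ∀ E : ℝ, IsHalfTrace (ℓa + ℓb) (concatPair ℓa fa fb) E (xab E)) :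
    Filter.Tendsto (fun E => FV (xab E) (xa E) (xb E)) Filter.atTop (nhds 0) := by
  have hfa' : IntegrableOn fa (Ioc 0 ℓa) := hfa.integrable one_le_two
  have hfb' : IntegrableOn fb (Ioc 0 ℓb) := hfb.integrable one_le_two
  have hab := IsHalfTrace.tendsto_sub_cos hxab (integrableOn_concatPair hfa' hfb')
    (add_pos hℓa hℓb).le
  simp only [mul_add] at hab
  exact tendsto_FV_of_tendsto_sub_cos hab (IsHalfTrace.tendsto_sub_cos hxa hfa' hℓa.le)
    (IsHalfTrace.tendsto_sub_cos hxb hfb' hℓb.le)
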